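/- Let M = {(x,y,z) ∈ ℝ³ : z < −1}, set λ(z) = √(−1−z), γ(z) = 4(1+z), let μ : ℝ → ℝ be smooth, and let a, b : M → ℝ be smooth functions satisfying ∂a/∂x = 1, ∂a/∂y = −(λ(z) + μ(z)/2), ∂b/∂x = μ(z)/2 − λ(z), ∂b/∂y = 1 at every point of M. Define the vector fields e₁ = (1,0,0), e₂ = (0,1,0), e₃ = (a, b, −γ) on M and the matrix-valued map φ(x,y,z) = !![0, −1, −b/γ; 1, 0, a/γ; 0, 0, 0]. For a vector field X on M define (hX)(p) = (1/2)·([e₃, φX](p) − φ(p)·[e₃, X](p)), where φX is the vector field p ↦ φ(p)·X(p). Then at every point of M: h e₁ = λ e₁ and h e₂ = −λ e₂. -/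

import Mathlib

open Matrix

/-- `λ(z) = √(-1 - z)` -/
noncomputable def lam (z : ℝ) : ℝ := Real.sqrt (-1 - z)

/-- `γ(z) = 4(1 + z)` -/
noncomputable def gam (z : ℝ) : ℝ := 4 * (1 + z)

/-- The coordinate vector field `e₁ = ∂/∂x`. -/
noncomputable def e1 : (Fin 3 → ℝ) → (Fin 3 → ℝ) := fun _ => ![1, 0, 0]

/-- The coordinate vector field `e₂ = ∂/∂y`. -/
noncomputable def e2 : (Fin 3 → ℝ) → (Fin 3 → ℝ) := fun _ => ![0, 1, 0]

/-- The Reeb vector field `e₃ = a ∂x + b ∂y - γ ∂z` of the local model of a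
`3`-dimensional almost Kenmotsu generalized `(k,μ)`-space. -/
noncomputable def e3 (a b : (Fin 3 → ℝ) → ℝ) : (Fin 3 → ℝ) → (Fin 3 → ℝ) :=
  fun p => ![a p, b p, -gam (p 2)]

/-- The structure tensor `φ` of the local model. -/
noncomputable def phi (a b : (Fin 3 → ℝ) → ℝ) (p : Fin 3 → ℝ) : Matrix (Fin 3) (Fin 3) ℝ :=
  !![0, -1, -b p / gam (p 2);
     1, 0, a p / gam (p 2);
     0, 0, 0]

/-- The tensor field `h = (1/2) ℒ_ξ φ` applied to a vector field `X`, with `ξ = e₃`: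
`(hX)(p) = (1/2)([e₃, φX](p) - φ(p)·[e₃, X](p))`. -/
noncomputable def hOp (a b : (Fin 3 → ℝ) → ℝ) (X : (Fin 3 → ℝ) → (Fin 3 → ℝ)) :
    (Fin 3 → ℝ) → (Fin 3 → ℝ) :=
  fun p => (1 / 2 : ℝ) •
    (VectorField.lieBracket ℝ (e3 a b) (fun q => phi a b q *ᵥ X q) p
      - phi a b p *ᵥ VectorField.lieBracket ℝ (e3 a b) X p)

lemma fderiv_e3_apply (a b : (Fin 3 → ℝ) → ℝ) (p v : Fin 3 → ℝ)
    (hda : DifferentiableAt ℝ a p) (hdb : DifferentiableAt ℝ b p) :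
    fderiv ℝ (e3 a b) p v = ![fderiv ℝ a p v, fderiv ℝ b p v, -4 * v 2] := by
  have hgam : HasFDerivAt (fun q : Fin 3 → ℝ => -gam (q 2))
      (((-4:ℝ) • ContinuousLinearMap.proj 2 : (Fin 3 → ℝ) →L[ℝ] ℝ)) p := by
    have h0 : HasFDerivAt (fun q : Fin 3 → ℝ => q 2)
        (ContinuousLinearMap.proj 2 : (Fin 3 → ℝ) →L[ℝ] ℝ) p :=
      (ContinuousLinearMap.proj (R := ℝ) (φ := fun _ : Fin 3 => ℝ) 2).hasFDerivAt
    have h1 := (h0.const_mul (-4)).add_const (-4)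
    have hfun : (fun q : Fin 3 → ℝ => -gam (q 2)) = fun x => -4 * x 2 + -4 := by
      funext q; simp [gam]; ring
    rw [hfun]; exact h1
  have hL : HasFDerivAt (e3 a b)
      (ContinuousLinearMap.pi
        ![fderiv ℝ a p, fderiv ℝ b p, ((-4:ℝ) • ContinuousLinearMap.proj 2)]) p := by
    have heq : e3 a b = fun x i => (![a, b, fun q : Fin 3 → ℝ => -gam (q 2)] : Fin 3 → _) i x := by
      funext x i; fin_cases i <;> rfl
    rw [heq]
    apply hasFDerivAt_pi.2
    intro i
    fin_cases i
    · exact hda.hasFDerivAt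
    · exact hdb.hasFDerivAt
    · exact hgam
  rw [hL.fderiv]
  funext i; fin_cases i <;> simp

theorem stmt_15 (μ : ℝ → ℝ) (hμ : ContDiff ℝ (⊤ : ℕ∞) μ)
    (a b : (Fin 3 → ℝ) → ℝ)
    (ha : ContDiffOn ℝ (⊤ : ℕ∞) a {p : Fin 3 → ℝ | p 2 < -1})
    (hb : ContDiffOn ℝ (⊤ : ℕ∞) b {p : Fin 3 → ℝ | p 2 < -1})
    (hax : ∀ p : Fin 3 → ℝ, p 2 < -1 → fderiv ℝ a p ![1, 0, 0] = 1)
    (hay : ∀ p : Fin 3 → ℝ, p 2 < -1 →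
      fderiv ℝ a p ![0, 1, 0] = -(lam (p 2) + μ (p 2) / 2))
    (hbx : ∀ p : Fin 3 → ℝ, p 2 < -1 →
      fderiv ℝ b p ![1, 0, 0] = μ (p 2) / 2 - lam (p 2))
    (hby : ∀ p : Fin 3 → ℝ, p 2 < -1 → fderiv ℝ b p ![0, 1, 0] = 1) :
    ∀ p : Fin 3 → ℝ, p 2 < -1 →
      hOp a b e1 p = lam (p 2) • e1 p ∧
      hOp a b e2 p = -lam (p 2) • e2 p := by
  intro p hp
  have hsopen : IsOpen {p : Fin 3 → ℝ | p 2 < -1} := by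
    have : Continuous fun p : Fin 3 → ℝ => p 2 := continuous_apply 2
    exact isOpen_lt this continuous_const
  have hda : DifferentiableAt ℝ a p :=
    ((ha p hp).contDiffAt (hsopen.mem_nhds hp)).differentiableAt (by simp)
  have hdb : DifferentiableAt ℝ b p :=
    ((hb p hp).contDiffAt (hsopen.mem_nhds hp)).differentiableAt (by simp)
  -- φ e1 and φ e2 are constant vector fields
  have hphie1 : (fun q => phi a b q *ᵥ e1 q) = fun _ : Fin 3 → ℝ => ![0, 1, 0] := by
    funext q
    funext i; fin_cases i <;>
      simp [phi, e1, Matrix.mulVec, dotProduct, Fin.sum_univ_three]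
  have hphie2 : (fun q => phi a b q *ᵥ e2 q) = fun _ : Fin 3 → ℝ => ![-1, 0, 0] := by
    funext q
    funext i; fin_cases i <;>
      simp [phi, e2, Matrix.mulVec, dotProduct, Fin.sum_univ_three]
  -- brackets
  have hbr : ∀ v : Fin 3 → ℝ,
      VectorField.lieBracket ℝ (e3 a b) (fun _ : Fin 3 → ℝ => v) p
        = -(fderiv ℝ (e3 a b) p v) := by
    intro v
    rw [VectorField.lieBracket]
    simp
  have key1 : VectorField.lieBracket ℝ (e3 a b) (fun q => phi a b q *ᵥ e1 q) p
      = -![fderiv ℝ a p ![0,1,0], fderiv ℝ b p ![0,1,0], 0] := by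
    rw [hphie1, hbr, fderiv_e3_apply a b p _ hda hdb]
    norm_num
    rfl
  have key2 : VectorField.lieBracket ℝ (e3 a b) e1 p
      = -![fderiv ℝ a p ![1,0,0], fderiv ℝ b p ![1,0,0], 0] := by
    rw [show e1 = fun _ : Fin 3 → ℝ => ![1,0,0] from rfl, hbr,
      fderiv_e3_apply a b p _ hda hdb]
    norm_num
    rfl
  have key3 : VectorField.lieBracket ℝ (e3 a b) (fun q => phi a b q *ᵥ e2 q) p
      = ![fderiv ℝ a p ![1,0,0], fderiv ℝ b p ![1,0,0], 0] := by
    have hneg : (![-1,0,0] : Fin 3 → ℝ) = -![1,0,0] := by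
      funext i; fin_cases i <;> simp
    rw [hphie2, hbr, hneg, map_neg, fderiv_e3_apply a b p _ hda hdb]
    funext i; fin_cases i <;> simp
  have key4 : VectorField.lieBracket ℝ (e3 a b) e2 p
      = -![fderiv ℝ a p ![0,1,0], fderiv ℝ b p ![0,1,0], 0] := by
    rw [show e2 = fun _ : Fin 3 → ℝ => ![0,1,0] from rfl, hbr,
      fderiv_e3_apply a b p _ hda hdb]
    norm_num
    rfl
  simp only [hax p hp, hay p hp, hbx p hp, hby p hp] at key1 key2 key3 key4
  constructor
  · funext i
    simp only [hOp, key1, key2]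
    fin_cases i <;>
      simp [phi, e1, Matrix.mulVec, dotProduct, Fin.sum_univ_three,
        Matrix.vecHead, Matrix.vecTail, Function.comp] <;> ring
  · funext i
    simp only [hOp, key3, key4]
    fin_cases i <;>
      simp [phi, e2, Matrix.mulVec, dotProduct, Fin.sum_univ_three,
        Matrix.vecHead, Matrix.vecTail, Function.comp] <;> ring
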